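/- arXiv:2605.10919 — 7 statements merged into one kernel-verified Lean document; each statement's English description precedes it below -/
import Mathlib

section
/- For every integer d ≥ 1 and every probability vector p ∈ ℝ^d, the extended-valued integral ∫⁻_{t∈(0,1)} (−log(1−t))/p'(t) dt (with values in [0,∞]) is at least π/4. -/
open MeasureTheory Real

/-- `p'(t) = ∑_{i=1}^d i·p_i·t^{i-1}`, where the probability vector `p : Fin d → ℝ`
has `p i` corresponding to degree `i + 1`. -/
noncomputable def pderiv {d : ℕ} (p : Fin d → ℝ) (t : ℝ) : ℝ :=
  ∑ i : Fin d, ((i : ℕ) + 1 : ℝ) * p i * t ^ (i : ℕ)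

lemma pderiv_continuous {d : ℕ} (p : Fin d → ℝ) : Continuous (pderiv p) := by
  unfold pderiv
  exact continuous_finset_sum _ fun i _ => (continuous_const.mul (continuous_pow _))

lemma pderiv_pos {d : ℕ} (p : Fin d → ℝ) (hp0 : ∀ i, 0 ≤ p i) (hp1 : ∑ i, p i = 1)
    {t : ℝ} (ht : 0 < t) : 0 < pderiv p t := by
  have hex : ∃ i, 0 < p i := by
    by_contra h
    push_neg at h
    have : ∀ i, p i = 0 := fun i => le_antisymm (h i) (hp0 i)
    simp [this] at hp1
  obtain ⟨j, hj⟩ := hex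
  apply Finset.sum_pos'
  · intro i _
    exact mul_nonneg (mul_nonneg (by positivity) (hp0 i)) (pow_nonneg ht.le _)
  · exact ⟨j, Finset.mem_univ j,
      mul_pos (mul_pos (by positivity) hj) (pow_pos ht _)⟩

lemma lintegral_pderiv {d : ℕ} (p : Fin d → ℝ) (hp0 : ∀ i, 0 ≤ p i) (hp1 : ∑ i, p i = 1) :
    ∫⁻ t in Set.Ioo (0 : ℝ) 1, ENNReal.ofReal (pderiv p t) = 1 := by
  have hint : IntegrableOn (pderiv p) (Set.Ioo (0 : ℝ) 1) := by
    apply (pderiv_continuous p).integrableOn_Icc.mono_set Set.Ioo_subset_Icc_self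
  have hnn : 0 ≤ᵐ[volume.restrict (Set.Ioo (0:ℝ) 1)] pderiv p := by
    filter_upwards [ae_restrict_mem measurableSet_Ioo] with t ht
    exact (pderiv_pos p hp0 hp1 ht.1).le
  rw [← ofReal_integral_eq_lintegral_ofReal hint hnn]
  have : ∫ t in Set.Ioo (0:ℝ) 1, pderiv p t = 1 := by
    rw [← integral_Ioc_eq_integral_Ioo, ← intervalIntegral.integral_of_le zero_le_one]
    unfold pderiv
    rw [intervalIntegral.integral_finset_sum]
    · have : ∀ i : Fin d, ∫ t in (0:ℝ)..1, ((i : ℕ) + 1 : ℝ) * p i * t ^ (i : ℕ) = p i := by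
        intro i
        rw [intervalIntegral.integral_const_mul, integral_pow]
        have h1 : ((i : ℕ) + 1 : ℝ) ≠ 0 := by positivity
        field_simp
        simp
      rw [Finset.sum_congr rfl fun i _ => this i, hp1]
    · intro i _
      exact (Continuous.intervalIntegrable (by continuity) 0 1)
  rw [this, ENNReal.ofReal_one]

lemma image_aux : (fun u : ℝ => 1 - Real.exp (-u)) '' Set.Ioi 0 = Set.Ioo (0:ℝ) 1 := by
  ext x
  simp only [Set.mem_image, Set.mem_Ioi, Set.mem_Ioo]
  constructor
  · rintro ⟨u, hu, rfl⟩
    have h1 : Real.exp (-u) < 1 := by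
      rw [Real.exp_lt_one_iff]; linarith
    have h2 : 0 < Real.exp (-u) := Real.exp_pos _
    constructor <;> linarith
  · rintro ⟨h0, h1⟩
    refine ⟨-Real.log (1 - x), ?_, ?_⟩
    · have : Real.log (1 - x) < 0 := Real.log_neg (by linarith) (by linarith)
      linarith
    · rw [neg_neg, Real.exp_log (by linarith)]
      ring

lemma sqrt_log_integral :
    ∫⁻ t in Set.Ioo (0 : ℝ) 1, ENNReal.ofReal (Real.sqrt (-Real.log (1 - t)))
      = ENNReal.ofReal (Real.sqrt π / 2) := by
  set f : ℝ → ℝ := fun u => 1 - Real.exp (-u) with hf_def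
  have hs : MeasurableSet (Set.Ioi (0:ℝ)) := measurableSet_Ioi
  have hf' : ∀ x ∈ Set.Ioi (0:ℝ), HasDerivWithinAt f (Real.exp (-x)) (Set.Ioi 0) x := by
    intro x _
    have h1 : HasDerivAt (fun u : ℝ => Real.exp (-u)) (Real.exp (-x) * (-1)) x :=
      (Real.hasDerivAt_exp (-x)).comp x (hasDerivAt_neg x)
    have h2 : HasDerivAt f (-(Real.exp (-x) * (-1))) x := h1.const_sub 1
    simpa using h2.hasDerivWithinAt
  have hinj : Set.InjOn f (Set.Ioi 0) := by
    intro a _ b _ h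
    have : Real.exp (-a) = Real.exp (-b) := by
      simp only [hf_def] at h; linarith
    have := Real.exp_injective this
    linarith
  have key := integral_image_eq_integral_abs_deriv_smul hs hf' hinj
    (fun t => Real.sqrt (-Real.log (1 - t)))
  rw [image_aux] at key
  have heq : ∀ u ∈ Set.Ioi (0:ℝ),
      |Real.exp (-u)| • Real.sqrt (-Real.log (1 - f u)) = Real.exp (-u) * u ^ ((3:ℝ)/2 - 1) := by
    intro u hu
    have hu' : (0:ℝ) < u := hu
    have : 1 - f u = Real.exp (-u) := by simp [hf_def]
    rw [this, Real.log_exp, neg_neg, abs_of_pos (Real.exp_pos _), smul_eq_mul,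
      Real.sqrt_eq_rpow]
    norm_num
  have hint : IntegrableOn (fun t => Real.sqrt (-Real.log (1 - t))) (Set.Ioo (0:ℝ) 1) := by
    rw [← image_aux]
    rw [integrableOn_image_iff_integrableOn_abs_deriv_smul hs hf' hinj]
    apply IntegrableOn.congr_fun (Real.GammaIntegral_convergent (by norm_num : (0:ℝ) < 3/2))
      (fun u hu => (heq u hu).symm) hs
  have hnn : 0 ≤ᵐ[volume.restrict (Set.Ioo (0:ℝ) 1)]
      (fun t => Real.sqrt (-Real.log (1 - t))) := by
    filter_upwards with t using Real.sqrt_nonneg _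
  rw [← ofReal_integral_eq_lintegral_ofReal hint hnn, key,
    setIntegral_congr_fun hs heq, ← Real.Gamma_eq_integral (by norm_num : (0:ℝ) < 3/2)]
  have : Real.Gamma (3/2) = Real.sqrt π / 2 := by
    have h := Real.Gamma_add_one (s := 1/2) (by norm_num)
    norm_num at h
    rw [show (3:ℝ)/2 = 1/2 + 1 by norm_num, Real.Gamma_add_one (by norm_num),
      Real.Gamma_one_half_eq]
    ring
  rw [this]

theorem stmt_0 (d : ℕ) (hd : 1 ≤ d) (p : Fin d → ℝ)
    (hp0 : ∀ i, 0 ≤ p i) (hp1 : ∑ i, p i = 1) :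
    ENNReal.ofReal (π / 4) ≤
      ∫⁻ t in Set.Ioo (0 : ℝ) 1,
        ENNReal.ofReal ((-Real.log (1 - t)) / pderiv p t) := by
  set μ := volume.restrict (Set.Ioo (0:ℝ) 1)
  set F : ℝ → ENNReal := fun t => ENNReal.ofReal ((-Real.log (1 - t)) / pderiv p t) with hF
  set G : ℝ → ENNReal := fun t => ENNReal.ofReal (pderiv p t) with hG
  have hFm : AEMeasurable F μ := by
    apply Measurable.aemeasurable
    apply ENNReal.measurable_ofReal.comp
    exact ((Real.measurable_log.comp (measurable_const.sub measurable_id)).neg).div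
      (pderiv_continuous p).measurable
  have hGm : AEMeasurable G μ := by
    exact (ENNReal.measurable_ofReal.comp (pderiv_continuous p).measurable).aemeasurable
  have hCS := ENNReal.lintegral_mul_norm_pow_le hFm hGm
    (by norm_num : (0:ℝ) ≤ 1/2) (by norm_num : (0:ℝ) ≤ 1/2) (by norm_num)
  have hGint : ∫⁻ t, G t ∂μ = 1 := lintegral_pderiv p hp0 hp1
  have hprod : ∫⁻ t, F t ^ ((1:ℝ)/2) * G t ^ ((1:ℝ)/2) ∂μ
      = ENNReal.ofReal (Real.sqrt π / 2) := by
    rw [← sqrt_log_integral]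
    apply lintegral_congr_ae
    filter_upwards [ae_restrict_mem measurableSet_Ioo] with t ht
    have hb : 0 < pderiv p t := pderiv_pos p hp0 hp1 ht.1
    have ha : 0 ≤ -Real.log (1 - t) := by
      have : Real.log (1 - t) < 0 := Real.log_neg (by linarith [ht.2]) (by linarith [ht.1])
      linarith
    have hdiv : 0 ≤ (-Real.log (1 - t)) / pderiv p t := div_nonneg ha hb.le
    simp only [hF, hG]
    rw [ENNReal.ofReal_rpow_of_nonneg hdiv (by norm_num),
      ENNReal.ofReal_rpow_of_nonneg hb.le (by norm_num),
      ← ENNReal.ofReal_mul (by positivity),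
      ← Real.mul_rpow hdiv hb.le]
    have : (-Real.log (1 - t)) / pderiv p t * pderiv p t = -Real.log (1 - t) :=
      div_mul_cancel₀ _ hb.ne'
    rw [this, Real.sqrt_eq_rpow]
  rw [hprod, hGint] at hCS
  simp only [ENNReal.one_rpow, mul_one] at hCS
  have h2 : (ENNReal.ofReal (Real.sqrt π / 2)) ^ (2:ℝ)
      ≤ ((∫⁻ t, F t ∂μ) ^ ((1:ℝ)/2)) ^ (2:ℝ) :=
    ENNReal.rpow_le_rpow hCS (by norm_num)
  rw [← ENNReal.rpow_mul] at h2
  norm_num [ENNReal.rpow_one] at h2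
  calc ENNReal.ofReal (π / 4)
      = ENNReal.ofReal (Real.sqrt π / 2) ^ (2:ℕ) := by
        rw [← ENNReal.ofReal_pow (by positivity), div_pow, Real.sq_sqrt Real.pi_nonneg]
        norm_num
    _ ≤ _ := h2
end

section
/- The function f is strictly convex on the part of the probability simplex where the first coordinate is positive: for every integer d ≥ 1, all probability vectors p ≠ q in ℝ^d with p_1 > 0 and q_1 > 0, and every λ ∈ (0,1), it holds that f(λp + (1−λ)q) < λ·f(p) + (1−λ)·f(q). -/
open MeasureTheory Real

/-! The integrand depends on `p` only through `p'(t)`, which is affine in `p`, and for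
`c = -log (1 - t) > 0` the map `x ↦ c / x` is strictly convex on `(0, ∞)`. So the inequality
holds pointwise, strictly wherever `p'(t) ≠ q'(t)`; since `p' - q'` is a nonzero polynomial when
`p ≠ q`, that is almost everywhere. The bound `p'(t) ≥ p_1 > 0` and the integrability of `log`
make all three integrands integrable, so the pointwise inequality integrates to a strict one. -/

open Polynomial Set

theorem integral_lt_integral_of_ae_lt {α : Type*} [MeasurableSpace α] {μ : Measure α}
    {f g : α → ℝ} (hf : Integrable f μ) (hg : Integrable g μ)
    (hlt : ∀ᵐ x ∂μ, f x < g x) (hμ : μ ≠ 0) : ∫ x, f x ∂μ < ∫ x, g x ∂μ := by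
  rw [← sub_pos, ← integral_sub hg hf,
    integral_pos_iff_support_of_nonneg_ae (hlt.mono fun x h => (sub_pos.2 h).le) (hg.sub hf)]
  have hsupp : Function.support (fun x => g x - f x) =ᵐ[μ] (univ : Set α) :=
    ae_eq_univ.2 <| measure_mono_null (fun x hx h => hx (sub_pos.2 h).ne') (ae_iff.1 hlt)
  rw [measure_congr hsupp]
  exact Measure.measure_univ_pos.2 hμ

theorem div_convexComb_lt {L A B a b : ℝ} (hL : 0 < L) (hA : 0 < A) (hB : 0 < B) (hAB : A ≠ B)
    (ha : 0 < a) (hb : 0 < b) (hab : a + b = 1) :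
    L / (a * A + b * B) < a * (L / A) + b * (L / B) := by
  have h := (strictConvexOn_zpow (m := -1) (by norm_num) (by norm_num)).2
    (mem_Ioi.2 hA) (mem_Ioi.2 hB) hAB ha hb hab
  simp only [zpow_neg_one, smul_eq_mul] at h
  simp only [div_eq_mul_inv]
  nlinarith [mul_lt_mul_of_pos_left h hL]

theorem integrableOn_neg_log_one_sub_div {g : ℝ → ℝ} {c : ℝ} (hc : 0 < c) (hg : Measurable g)
    (hgc : ∀ t ∈ Ioo (0 : ℝ) 1, c ≤ g t) :
    IntegrableOn (fun t => -log (1 - t) / g t) (Ioo 0 1) := by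
  have hlog : IntegrableOn (fun t : ℝ => -log (1 - t)) (Ioo 0 1) := by
    have h := (intervalIntegral.intervalIntegrable_log' (a := 1) (b := 0)).comp_sub_left 1
    rw [sub_self, sub_zero, intervalIntegrable_iff_integrableOn_Ioo_of_le zero_le_one] at h
    exact h.neg
  refine hlog.mul_bdd (c := c⁻¹) hg.inv.aestronglyMeasurable ?_
  filter_upwards [ae_restrict_mem measurableSet_Ioo] with t ht
  have hgt := hgc t ht
  rw [norm_inv, norm_of_nonneg (hc.le.trans hgt)]
  exact inv_anti₀ hc hgt

section pderiv

variable {d : ℕ}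

theorem continuous_pderiv (p : Fin d → ℝ) : Continuous (pderiv p) :=
  continuous_finsetSum _ fun _ _ => by fun_prop

theorem pderiv_smul_add_smul (p q : Fin d → ℝ) (a b t : ℝ) :
    pderiv (a • p + b • q) t = a * pderiv p t + b * pderiv q t := by
  simp only [pderiv, Pi.add_apply, Pi.smul_apply, smul_eq_mul, Finset.mul_sum,
    ← Finset.sum_add_distrib]
  exact Finset.sum_congr rfl fun i _ => by ring

theorem pderiv_sub (p q : Fin d → ℝ) (t : ℝ) : pderiv (p - q) t = pderiv p t - pderiv q t := by
  simp only [pderiv, Pi.sub_apply, ← Finset.sum_sub_distrib]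
  exact Finset.sum_congr rfl fun i _ => by ring

theorem le_pderiv (hd : 1 ≤ d) {p : Fin d → ℝ} (hp0 : ∀ i, 0 ≤ p i) {t : ℝ} (ht : 0 ≤ t) :
    p ⟨0, hd⟩ ≤ pderiv p t := by
  have h := Finset.single_le_sum (f := fun i : Fin d => ((i : ℕ) + 1 : ℝ) * p i * t ^ (i : ℕ))
    (fun i _ => by have := hp0 i; positivity) (Finset.mem_univ ⟨0, hd⟩)
  simpa [pderiv] using h

noncomputable def pderivPoly (p : Fin d → ℝ) : ℝ[X] :=
  ∑ i : Fin d, C (((i : ℕ) + 1 : ℝ) * p i) * X ^ (i : ℕ)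

theorem eval_pderivPoly (p : Fin d → ℝ) (t : ℝ) : (pderivPoly p).eval t = pderiv p t := by
  simp [pderivPoly, pderiv, eval_finsetSum]

theorem coeff_pderivPoly (p : Fin d → ℝ) (i : Fin d) :
    (pderivPoly p).coeff i = ((i : ℕ) + 1 : ℝ) * p i := by
  simp only [pderivPoly, finsetSum_coeff, coeff_C_mul_X_pow, Fin.val_inj, Finset.sum_ite_eq,
    Finset.mem_univ, if_true]

theorem pderivPoly_ne_zero {p : Fin d → ℝ} (hp : p ≠ 0) : pderivPoly p ≠ 0 := by
  obtain ⟨i, hi⟩ := Function.ne_iff.1 hp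
  intro h
  have hc := coeff_pderivPoly p i
  rw [h, coeff_zero] at hc
  exact mul_ne_zero (by positivity) hi hc.symm

theorem ae_pderiv_ne {p q : Fin d → ℝ} (hpq : p ≠ q) : ∀ᵐ t, pderiv p t ≠ pderiv q t := by
  have hroots := finite_setOfPred_isRoot (pderivPoly_ne_zero (sub_ne_zero.2 hpq))
  refine measure_mono_null (fun t ht => ?_) (hroots.measure_zero volume)
  simp_all [IsRoot, eval_pderivPoly, pderiv_sub, sub_eq_zero]

theorem integrableOn_neg_log_one_sub_div_pderiv (hd : 1 ≤ d) {p : Fin d → ℝ}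
    (hp0 : ∀ i, 0 ≤ p i) (hp : 0 < p ⟨0, hd⟩) :
    IntegrableOn (fun t => -log (1 - t) / pderiv p t) (Ioo 0 1) :=
  integrableOn_neg_log_one_sub_div hp (continuous_pderiv p).measurable
    fun _ ht => le_pderiv hd hp0 ht.1.le

end pderiv

theorem stmt_4_general (d : ℕ) (hd : 1 ≤ d) (p q : Fin d → ℝ)
    (hp0 : ∀ i, 0 ≤ p i) (hp : 0 < p ⟨0, hd⟩)
    (hq0 : ∀ i, 0 ≤ q i) (hq : 0 < q ⟨0, hd⟩)
    (hpq : p ≠ q) (l : ℝ) (hl0 : 0 < l) (hl1 : l < 1) :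
    (∫ t in Set.Ioo (0 : ℝ) 1,
        (-Real.log (1 - t)) / pderiv (l • p + (1 - l) • q) t) <
      l * (∫ t in Set.Ioo (0 : ℝ) 1, (-Real.log (1 - t)) / pderiv p t) +
      (1 - l) * (∫ t in Set.Ioo (0 : ℝ) 1, (-Real.log (1 - t)) / pderiv q t) := by
  have hl1' : 0 < 1 - l := sub_pos.2 hl1
  have hr0 : ∀ i, 0 ≤ (l • p + (1 - l) • q) i := fun i => by
    have := hp0 i; have := hq0 i
    simp only [Pi.add_apply, Pi.smul_apply, smul_eq_mul]; positivity
  have hr : 0 < (l • p + (1 - l) • q) ⟨0, hd⟩ := by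
    simp only [Pi.add_apply, Pi.smul_apply, smul_eq_mul]; positivity
  have hIp := (integrableOn_neg_log_one_sub_div_pderiv hd hp0 hp).const_mul l
  have hIq := (integrableOn_neg_log_one_sub_div_pderiv hd hq0 hq).const_mul (1 - l)
  rw [← integral_const_mul, ← integral_const_mul, ← integral_add hIp hIq]
  refine integral_lt_integral_of_ae_lt (integrableOn_neg_log_one_sub_div_pderiv hd hr0 hr)
    (hIp.add hIq) ?_ (by simp)
  filter_upwards [ae_restrict_of_ae (ae_pderiv_ne hpq), ae_restrict_mem measurableSet_Ioo]
    with t hne ht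
  have hlog : 0 < -log (1 - t) := neg_pos.2 (log_neg (by linarith [ht.2]) (by linarith [ht.1]))
  rw [pderiv_smul_add_smul]
  exact div_convexComb_lt hlog (hp.trans_le (le_pderiv hd hp0 ht.1.le))
    (hq.trans_le (le_pderiv hd hq0 ht.1.le)) hne hl0 hl1' (add_sub_cancel l 1)

theorem stmt_4 (d : ℕ) (hd : 1 ≤ d) (p q : Fin d → ℝ)
    (hp0 : ∀ i, 0 ≤ p i) (hp1 : ∑ i, p i = 1) (hp : 0 < p ⟨0, hd⟩)
    (hq0 : ∀ i, 0 ≤ q i) (hq1 : ∑ i, q i = 1) (hq : 0 < q ⟨0, hd⟩)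
    (hpq : p ≠ q) (l : ℝ) (hl0 : 0 < l) (hl1 : l < 1) :
    (∫ t in Set.Ioo (0 : ℝ) 1,
        (-Real.log (1 - t)) / pderiv (l • p + (1 - l) • q) t) <
      l * (∫ t in Set.Ioo (0 : ℝ) 1, (-Real.log (1 - t)) / pderiv p t) +
      (1 - l) * (∫ t in Set.Ioo (0 : ℝ) 1, (-Real.log (1 - t)) / pderiv q t) :=
  stmt_4_general d hd p q hp0 hp hq0 hq hpq l hl0 hl1
end

section
/- KKT necessity: let d ≥ 2 and let p* ∈ ℝ^d be a probability vector with p*_1 > 0 such that for every probability vector q ∈ ℝ^d the extended-valued integral ∫⁻_{t∈(0,1)} (−log(1−t))/q'(t) dt is at least ENNReal.ofReal(∫₀¹ (−log(1−t))/p*'(t) dt). Then, with I_i := ∫₀¹ i·t^{i−1}·(−log(1−t))/p*'(t)² dt and v := ∫₀¹ (−log(1−t))/p*'(t) dt, it holds that I_i = v for every i with p*_i > 0, and I_i ≤ v for every i ∈ {1,…,d}. -/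
open MeasureTheory Real

lemma measurable_pderiv {d : ℕ} (q : Fin d → ℝ) : Measurable (pderiv q) := by
  unfold pderiv; fun_prop

lemma measurable_w : Measurable (fun t : ℝ => -Real.log (1 - t)) :=
  (Real.measurable_log.comp ((measurable_const.sub measurable_id))).neg

lemma w_nonneg {t : ℝ} (ht : t ∈ Set.Ioo (0:ℝ) 1) : 0 ≤ -Real.log (1 - t) := by
  have : Real.log (1 - t) ≤ 0 := Real.log_nonpos (by linarith [ht.1, ht.2]) (by linarith [ht.1])
  linarith

lemma int_w : IntegrableOn (fun t : ℝ => -Real.log (1 - t)) (Set.Ioo (0:ℝ) 1) volume := by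
  have h : IntegrableOn (fun t : ℝ => -Real.log (1 - t)) (Set.Ioc (0:ℝ) 1) volume := by
    apply intervalIntegral.integrableOn_deriv_of_nonneg (g := fun t => (1 - t) * Real.log (1 - t) + t)
    · exact ((Real.continuous_mul_log.comp (continuous_const.sub continuous_id)).add
        continuous_id).continuousOn
    · intro x hx
      have h1 : (1 : ℝ) - x ≠ 0 := by simp only [Set.mem_Ioo] at hx; intro h; linarith [hx.2]
      have := (Real.hasDerivAt_mul_log h1).comp x
        ((hasDerivAt_id x).const_sub 1)
      have h2 := this.add (hasDerivAt_id x)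
      exact h2.congr_deriv (by ring)
    · intro x hx; exact w_nonneg hx
  exact h.mono_set Set.Ioo_subset_Ioc_self

lemma pderiv_lb {d : ℕ} (hd : 0 < d) (p : Fin d → ℝ) (hp : ∀ i, 0 ≤ p i) {t : ℝ}
    (ht : 0 ≤ t) : p ⟨0, hd⟩ ≤ pderiv p t := by
  have h0 : ((((⟨0, hd⟩ : Fin d) : ℕ) : ℝ) + 1) * p ⟨0, hd⟩ * t ^ ((⟨0, hd⟩ : Fin d) : ℕ)
      = p ⟨0, hd⟩ := by simp
  calc p ⟨0, hd⟩ = _ := h0.symm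
    _ ≤ pderiv p t := by
        apply Finset.single_le_sum (f := fun i : Fin d => ((i:ℕ) + 1 : ℝ) * p i * t ^ (i:ℕ))
        · intro i _
          have h3 : (0:ℝ) ≤ t ^ (i:ℕ) := pow_nonneg ht _
          exact mul_nonneg (mul_nonneg (by positivity) (hp i)) h3
        · exact Finset.mem_univ _

lemma pderiv_ub {d : ℕ} (p : Fin d → ℝ) (hp : ∀ i, 0 ≤ p i) (hp1 : ∑ i, p i = 1) {t : ℝ}
    (ht : 0 ≤ t) (ht1 : t ≤ 1) : pderiv p t ≤ d := by
  have : pderiv p t ≤ ∑ i : Fin d, (d : ℝ) * p i := by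
    apply Finset.sum_le_sum
    intro i _
    have h1 : ((i:ℕ) + 1 : ℝ) ≤ d := by exact_mod_cast Nat.succ_le_of_lt i.isLt
    have h2 : t ^ (i:ℕ) ≤ 1 := pow_le_one₀ ht ht1
    have h3 : (0:ℝ) ≤ t ^ (i:ℕ) := pow_nonneg ht _
    calc ((i:ℕ) + 1 : ℝ) * p i * t ^ (i:ℕ) ≤ ((i:ℕ) + 1 : ℝ) * p i * 1 := by
          apply mul_le_mul_of_nonneg_left h2
          exact mul_nonneg (by positivity) (hp i)
      _ = ((i:ℕ) + 1 : ℝ) * p i := by ring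
      _ ≤ (d : ℝ) * p i := mul_le_mul_of_nonneg_right h1 (hp i)
  rwa [← Finset.mul_sum, hp1, mul_one] at this

lemma integrable_dom {f : ℝ → ℝ} (hm : AEStronglyMeasurable f (volume.restrict (Set.Ioo (0:ℝ) 1)))
    (C : ℝ) (hb : ∀ t ∈ Set.Ioo (0:ℝ) 1, |f t| ≤ C * (-Real.log (1 - t))) :
    IntegrableOn f (Set.Ioo (0:ℝ) 1) volume := by
  apply Integrable.mono' (int_w.const_mul C) hm
  filter_upwards [ae_restrict_mem measurableSet_Ioo] with t ht
  simpa using hb t ht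

lemma dom_bound {u w D N c : ℝ} (hu : |u| ≤ N) (hw : 0 ≤ w) (hc : 0 < c) (hD : c ≤ D) :
    |u * w / D| ≤ (N / c) * w := by
  have hD0 : 0 < D := hc.trans_le hD
  have hN : 0 ≤ N := (abs_nonneg u).trans hu
  rw [abs_div, abs_of_pos hD0, abs_mul, abs_of_nonneg hw, div_le_iff₀ hD0]
  have h1 : |u| * w ≤ N * w := mul_le_mul_of_nonneg_right hu hw
  have h2 : N * w = N / c * w * c := by field_simp
  have h3 : N / c * w * c ≤ N / c * w * D :=
    mul_le_mul_of_nonneg_left hD (mul_nonneg (div_nonneg hN hc.le) hw)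
  linarith

lemma pointwise_ineq {A wj Wt s : ℝ} (hA : 0 < A) (hwj : 0 ≤ wj) (hw : 0 ≤ Wt)
    (hs : 0 < s) (h1s : 0 < 1 - s) :
    Wt / ((1-s)*A + s*wj) ≤ Wt/A - s*(wj*Wt/A^2) + s*(Wt/A)
      + (s^2/(1-s))*((wj - A)^2*Wt/A^3) := by
  have hB : 0 < (1-s) * A + s * wj :=
    add_pos_of_pos_of_nonneg (mul_pos h1s hA) (mul_nonneg hs.le hwj)
  have key1 : 1/((1-s)*A + s*wj)
      ≤ 1/A - s*wj/A^2 + s/A + (s^2/(1-s)) * ((wj - A)^2/A^3) := by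
    have e1 : 1/((1-s)*A + s*wj)
        = 1/A - s*(wj - A)/A^2 + s^2*(wj - A)^2/(A^2*((1-s)*A + s*wj)) := by
      field_simp
      ring
    have e2 : s^2*(wj - A)^2/(A^2*((1-s)*A + s*wj))
        ≤ s^2*(wj - A)^2/(A^2*((1-s)*A)) := by
      apply div_le_div_of_nonneg_left (by positivity) (by positivity)
      nlinarith [mul_nonneg hs.le hwj, sq_nonneg A]
    have e3 : s^2*(wj - A)^2/(A^2*((1-s)*A)) = (s^2/(1-s)) * ((wj - A)^2/A^3) := by
      rw [div_mul_div_comm]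
      congr 1
      ring
    have e4 : s*(wj - A)/A^2 = s*wj/A^2 - s/A := by
      field_simp
    linarith
  calc Wt / ((1-s)*A + s*wj) = Wt * (1/((1-s)*A + s*wj)) := by ring
    _ ≤ Wt * (1/A - s*wj/A^2 + s/A + (s^2/(1-s)) * ((wj - A)^2/A^3)) :=
        mul_le_mul_of_nonneg_left key1 hw
    _ = _ := by ring

set_option maxHeartbeats 2000000 in
theorem stmt_9 (d : ℕ) (hd : 2 ≤ d) (ps : Fin d → ℝ)
    (hps0 : ∀ i, 0 ≤ ps i) (hps1 : ∑ i, ps i = 1)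
    (hps : 0 < ps ⟨0, by omega⟩)
    (hmin : ∀ q : Fin d → ℝ, (∀ i, 0 ≤ q i) → ∑ i, q i = 1 →
      ENNReal.ofReal (∫ t in Set.Ioo (0 : ℝ) 1, (-Real.log (1 - t)) / pderiv ps t) ≤
        ∫⁻ t in Set.Ioo (0 : ℝ) 1,
          ENNReal.ofReal ((-Real.log (1 - t)) / pderiv q t))
    (I : Fin d → ℝ)
    (hI : ∀ i : Fin d, I i =
      ∫ t in Set.Ioo (0 : ℝ) 1,
        ((i : ℕ) + 1 : ℝ) * t ^ (i : ℕ) * (-Real.log (1 - t)) / (pderiv ps t) ^ 2)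
    (v : ℝ)
    (hv : v = ∫ t in Set.Ioo (0 : ℝ) 1, (-Real.log (1 - t)) / pderiv ps t) :
    (∀ i : Fin d, 0 < ps i → I i = v) ∧ (∀ i : Fin d, I i ≤ v) := by
  have hd0 : 0 < d := by omega
  have hc : 0 < ps ⟨0, hd0⟩ := hps
  set c : ℝ := ps ⟨0, hd0⟩ with hcdef
  -- basic facts about `pderiv ps` on `Ioo 0 1`
  have ha_lb : ∀ t ∈ Set.Ioo (0:ℝ) 1, c ≤ pderiv ps t :=
    fun t ht => pderiv_lb hd0 ps hps0 ht.1.le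
  have ha_pos : ∀ t ∈ Set.Ioo (0:ℝ) 1, 0 < pderiv ps t :=
    fun t ht => hc.trans_le (ha_lb t ht)
  have ha_ub : ∀ t ∈ Set.Ioo (0:ℝ) 1, pderiv ps t ≤ d :=
    fun t ht => pderiv_ub ps hps0 hps1 ht.1.le ht.2.le
  have hwj_nn : ∀ (j : Fin d), ∀ t ∈ Set.Ioo (0:ℝ) 1, 0 ≤ ((j:ℕ) + 1 : ℝ) * t ^ (j:ℕ) := by
    intro j t ht
    have := pow_nonneg ht.1.le (j:ℕ)
    positivity
  have hwj_ub : ∀ (j : Fin d), ∀ t ∈ Set.Ioo (0:ℝ) 1, ((j:ℕ) + 1 : ℝ) * t ^ (j:ℕ) ≤ d := by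
    intro j t ht
    have h1 : ((j:ℕ) + 1 : ℝ) ≤ d := by exact_mod_cast Nat.succ_le_of_lt j.isLt
    have h2 : t ^ (j:ℕ) ≤ 1 := pow_le_one₀ ht.1.le ht.2.le
    have h3 : (0:ℝ) ≤ t ^ (j:ℕ) := pow_nonneg ht.1.le _
    calc ((j:ℕ) + 1 : ℝ) * t ^ (j:ℕ) ≤ ((j:ℕ) + 1 : ℝ) * 1 :=
          mul_le_mul_of_nonneg_left h2 (by positivity)
      _ ≤ d := by linarith
  -- integrability of the main integrands
  have hint0 : IntegrableOn (fun t => (-Real.log (1 - t)) / pderiv ps t)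
      (Set.Ioo (0:ℝ) 1) volume := by
    apply integrable_dom
      ((measurable_w.div (measurable_pderiv ps)).aestronglyMeasurable) ((1:ℝ)/c)
    intro t ht
    have := dom_bound (u := (1:ℝ)) (w := -Real.log (1-t)) (N := 1)
      (by simp) (w_nonneg ht) hc (ha_lb t ht)
    simpa using this
  have hint1 : ∀ j : Fin d, IntegrableOn
      (fun t => ((j:ℕ) + 1 : ℝ) * t ^ (j:ℕ) * (-Real.log (1 - t)) / (pderiv ps t) ^ 2)
      (Set.Ioo (0:ℝ) 1) volume := by
    intro j
    apply integrable_dom ((((measurable_const.mul (measurable_id.pow_const _)).mul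
      measurable_w).div ((measurable_pderiv ps).pow_const 2)).aestronglyMeasurable)
      ((d:ℝ)/c^2)
    intro t ht
    have hu : |((j:ℕ) + 1 : ℝ) * t ^ (j:ℕ)| ≤ d := by
      rw [abs_of_nonneg (hwj_nn j t ht)]; exact hwj_ub j t ht
    have hD : c^2 ≤ (pderiv ps t)^2 := by
      apply pow_le_pow_left₀ hc.le (ha_lb t ht)
    exact dom_bound hu (w_nonneg ht) (by positivity) hD
  have hint2 : ∀ j : Fin d, IntegrableOn
      (fun t => (((j:ℕ) + 1 : ℝ) * t ^ (j:ℕ) - pderiv ps t)^2 * (-Real.log (1 - t))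
        / (pderiv ps t) ^ 3) (Set.Ioo (0:ℝ) 1) volume := by
    intro j
    apply integrable_dom (((((measurable_const.mul (measurable_id.pow_const _)).sub
      (measurable_pderiv ps)).pow_const 2).mul
      measurable_w).div ((measurable_pderiv ps).pow_const 3)).aestronglyMeasurable
      (((d:ℝ)^2)/c^3)
    intro t ht
    have hu : |(((j:ℕ) + 1 : ℝ) * t ^ (j:ℕ) - pderiv ps t)^2| ≤ (d:ℝ)^2 := by
      rw [abs_of_nonneg (sq_nonneg _), ← sq_abs]
      have habs : |((j:ℕ) + 1 : ℝ) * t ^ (j:ℕ) - pderiv ps t| ≤ (d:ℝ) := by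
        rw [abs_le]
        constructor
        · have := hwj_nn j t ht; have := ha_ub t ht; linarith
        · have := hwj_ub j t ht; have := ha_pos t ht; linarith
      exact pow_le_pow_left₀ (abs_nonneg _) habs 2
    have hD : c^3 ≤ (pderiv ps t)^3 := pow_le_pow_left₀ hc.le (ha_lb t ht) 3
    exact dom_bound hu (w_nonneg ht) (by positivity) hD
  -- pointwise bound for the second-order remainder integrand
  have hbnd2 : ∀ j : Fin d, ∀ t ∈ Set.Ioo (0:ℝ) 1,
      |(((j:ℕ) + 1 : ℝ) * t ^ (j:ℕ) - pderiv ps t)^2 * (-Real.log (1 - t))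
        / (pderiv ps t) ^ 3| ≤ ((d:ℝ)^2/c^3) * (-Real.log (1 - t)) := by
    intro j t ht
    have hu : |(((j:ℕ) + 1 : ℝ) * t ^ (j:ℕ) - pderiv ps t)^2| ≤ (d:ℝ)^2 := by
      rw [abs_of_nonneg (sq_nonneg _), ← sq_abs]
      have habs : |((j:ℕ) + 1 : ℝ) * t ^ (j:ℕ) - pderiv ps t| ≤ (d:ℝ) := by
        rw [abs_le]
        constructor
        · have := hwj_nn j t ht; have := ha_ub t ht; linarith
        · have := hwj_ub j t ht; have := ha_pos t ht; linarith
      exact pow_le_pow_left₀ (abs_nonneg _) habs 2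
    have hD : c^3 ≤ (pderiv ps t)^3 := pow_le_pow_left₀ hc.le (ha_lb t ht) 3
    exact dom_bound hu (w_nonneg ht) (by positivity) hD
  have hint2 : ∀ j : Fin d, IntegrableOn
      (fun t => (((j:ℕ) + 1 : ℝ) * t ^ (j:ℕ) - pderiv ps t)^2 * (-Real.log (1 - t))
        / (pderiv ps t) ^ 3) (Set.Ioo (0:ℝ) 1) volume := by
    intro j
    exact integrable_dom (((((measurable_const.mul (measurable_id.pow_const _)).sub
      (measurable_pderiv ps)).pow_const 2).mul
      measurable_w).div ((measurable_pderiv ps).pow_const 3)).aestronglyMeasurable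
      (((d:ℝ)^2)/c^3) (hbnd2 j)
  set W : ℝ := ∫ t in Set.Ioo (0:ℝ) 1, -Real.log (1 - t) with hWdef
  have hW0 : 0 ≤ W := setIntegral_nonneg measurableSet_Ioo fun t ht => w_nonneg ht
  set M : ℝ := (d:ℝ)^2/c^3 * W with hMdef
  have hM0 : 0 ≤ M := mul_nonneg (by positivity) hW0
  -- bound the remainder integral
  have hf2le : ∀ j : Fin d, (∫ t in Set.Ioo (0:ℝ) 1,
      (((j:ℕ) + 1 : ℝ) * t ^ (j:ℕ) - pderiv ps t)^2 * (-Real.log (1 - t))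
        / (pderiv ps t) ^ 3) ≤ (d:ℝ)^2/c^3 * W := by
    intro j
    have heq : (d:ℝ)^2/c^3 * W
        = ∫ t in Set.Ioo (0:ℝ) 1, (d:ℝ)^2/c^3 * (-Real.log (1 - t)) := by
      rw [hWdef, MeasureTheory.integral_const_mul]
    rw [heq]
    apply setIntegral_mono_on (hint2 j) (int_w.const_mul _) measurableSet_Ioo
    intro t ht
    exact le_trans (le_abs_self _) (hbnd2 j t ht)
  -- main perturbation step
  have hIle : ∀ j : Fin d, I j ≤ v := by
    intro j
    have key : ∀ s : ℝ, 0 < s → s < 1 → I j ≤ v + s/(1-s) * M := by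
      intro s hs hs1
      have h1s : 0 < 1 - s := by linarith
      set q : Fin d → ℝ := fun i => (1-s) * ps i + s * (if i = j then 1 else 0) with hqdef
      have hq0 : ∀ i, 0 ≤ q i := by
        intro i
        have h1 : (0:ℝ) ≤ if i = j then (1:ℝ) else 0 := by split <;> norm_num
        have h2 := hps0 i
        simp only [hqdef]
        nlinarith
      have hq1 : ∑ i, q i = 1 := by
        simp only [hqdef]
        rw [Finset.sum_add_distrib, ← Finset.mul_sum, ← Finset.mul_sum, hps1,
          Finset.sum_ite_eq' Finset.univ j (fun _ => (1:ℝ))]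
        simp
      have hbform : ∀ t : ℝ,
          pderiv q t = (1-s) * pderiv ps t + s * (((j:ℕ)+1:ℝ) * t^(j:ℕ)) := by
        intro t
        have e1 : ∀ i : Fin d, ((i:ℕ)+1:ℝ) * q i * t^(i:ℕ)
            = (1-s) * (((i:ℕ)+1:ℝ) * ps i * t^(i:ℕ))
              + s * (if i = j then ((i:ℕ)+1:ℝ) * t^(i:ℕ) else 0) := by
          intro i
          rcases eq_or_ne i j with h | h
          · subst h
            simp only [hqdef, if_pos rfl, ite_true]
            ring
          · simp only [hqdef, if_neg h]
            ring
        calc pderiv q t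
            = ∑ i : Fin d, ((1-s) * (((i:ℕ)+1:ℝ) * ps i * t^(i:ℕ))
              + s * (if i = j then ((i:ℕ)+1:ℝ) * t^(i:ℕ) else 0)) :=
              Finset.sum_congr rfl (fun i _ => e1 i)
          _ = (1-s) * pderiv ps t + s * (((j:ℕ)+1:ℝ) * t^(j:ℕ)) := by
              rw [Finset.sum_add_distrib, ← Finset.mul_sum, ← Finset.mul_sum,
                Finset.sum_ite_eq' Finset.univ j]
              simp [pderiv]
      have hqlb : ∀ t ∈ Set.Ioo (0:ℝ) 1, (1-s) * c ≤ pderiv q t := by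
        intro t ht
        have h0 := pderiv_lb hd0 q hq0 ht.1.le
        have h1 : (0:ℝ) ≤ if (⟨0,hd0⟩ : Fin d) = j then (1:ℝ) else 0 := by split <;> norm_num
        have h2 : (1-s) * c ≤ q ⟨0, hd0⟩ := by
          simp only [hqdef]
          nlinarith
        linarith
      have hqpos : ∀ t ∈ Set.Ioo (0:ℝ) 1, 0 < pderiv q t := fun t ht =>
        lt_of_lt_of_le (by positivity) (hqlb t ht)
      have hintb : IntegrableOn (fun t => (-Real.log (1 - t)) / pderiv q t)
          (Set.Ioo (0:ℝ) 1) volume := by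
        apply integrable_dom ((measurable_w.div (measurable_pderiv q)).aestronglyMeasurable)
          ((1:ℝ)/((1-s)*c))
        intro t ht
        have := dom_bound (u := (1:ℝ)) (N := 1) (by simp) (w_nonneg ht)
          (show (0:ℝ) < (1-s)*c by positivity) (hqlb t ht)
        simpa using this
      have hnnb : 0 ≤ᵐ[volume.restrict (Set.Ioo (0:ℝ) 1)]
          fun t => (-Real.log (1 - t)) / pderiv q t := by
        filter_upwards [ae_restrict_mem measurableSet_Ioo] with t ht
        exact div_nonneg (w_nonneg ht) (hqpos t ht).le
      have hmq := hmin q hq0 hq1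
      rw [← hv, ← MeasureTheory.ofReal_integral_eq_lintegral_ofReal hintb hnnb] at hmq
      have step1 : v ≤ ∫ t in Set.Ioo (0:ℝ) 1, (-Real.log (1 - t)) / pderiv q t :=
        (ENNReal.ofReal_le_ofReal_iff (integral_nonneg_of_ae hnnb)).mp hmq
      have hpt : ∀ t ∈ Set.Ioo (0:ℝ) 1,
          (-Real.log (1 - t)) / pderiv q t ≤
            (-Real.log (1 - t)) / pderiv ps t
            - s * (((j:ℕ)+1:ℝ) * t^(j:ℕ) * (-Real.log (1 - t)) / (pderiv ps t)^2)
            + s * ((-Real.log (1 - t)) / pderiv ps t)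
            + (s^2/(1-s)) * ((((j:ℕ)+1:ℝ) * t^(j:ℕ) - pderiv ps t)^2
                * (-Real.log (1 - t)) / (pderiv ps t)^3) := by
        intro t ht
        rw [hbform t]
        exact pointwise_ineq (ha_pos t ht) (hwj_nn j t ht) (w_nonneg ht) hs h1s
      have hintF : IntegrableOn (fun t =>
          (-Real.log (1 - t)) / pderiv ps t
          - s * (((j:ℕ)+1:ℝ) * t^(j:ℕ) * (-Real.log (1 - t)) / (pderiv ps t)^2)
          + s * ((-Real.log (1 - t)) / pderiv ps t)
          + (s^2/(1-s)) * ((((j:ℕ)+1:ℝ) * t^(j:ℕ) - pderiv ps t)^2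
              * (-Real.log (1 - t)) / (pderiv ps t)^3))
          (Set.Ioo (0:ℝ) 1) volume :=
        ((hint0.sub ((hint1 j).const_mul s)).add (hint0.const_mul s)).add
          ((hint2 j).const_mul _)
      have step2 := setIntegral_mono_on hintb hintF measurableSet_Ioo hpt
      have hsplit : (∫ t in Set.Ioo (0:ℝ) 1,
          ((-Real.log (1 - t)) / pderiv ps t
          - s * (((j:ℕ)+1:ℝ) * t^(j:ℕ) * (-Real.log (1 - t)) / (pderiv ps t)^2)
          + s * ((-Real.log (1 - t)) / pderiv ps t)
          + (s^2/(1-s)) * ((((j:ℕ)+1:ℝ) * t^(j:ℕ) - pderiv ps t)^2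
              * (-Real.log (1 - t)) / (pderiv ps t)^3)))
          = v - s * I j + s * v + (s^2/(1-s)) * (∫ t in Set.Ioo (0:ℝ) 1,
              (((j:ℕ)+1:ℝ) * t^(j:ℕ) - pderiv ps t)^2
                * (-Real.log (1 - t)) / (pderiv ps t)^3) := by
        have hx1 : IntegrableOn (fun t => (-Real.log (1 - t)) / pderiv ps t
            - s * (((j:ℕ)+1:ℝ) * t^(j:ℕ) * (-Real.log (1 - t)) / (pderiv ps t)^2))
            (Set.Ioo (0:ℝ) 1) volume := hint0.sub ((hint1 j).const_mul s)
        have hx2 : IntegrableOn (fun t => (-Real.log (1 - t)) / pderiv ps t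
            - s * (((j:ℕ)+1:ℝ) * t^(j:ℕ) * (-Real.log (1 - t)) / (pderiv ps t)^2)
            + s * ((-Real.log (1 - t)) / pderiv ps t))
            (Set.Ioo (0:ℝ) 1) volume := hx1.add (hint0.const_mul s)
        have e_add1 : (∫ t in Set.Ioo (0:ℝ) 1,
            ((-Real.log (1 - t)) / pderiv ps t
            - s * (((j:ℕ)+1:ℝ) * t^(j:ℕ) * (-Real.log (1 - t)) / (pderiv ps t)^2)
            + s * ((-Real.log (1 - t)) / pderiv ps t)
            + (s^2/(1-s)) * ((((j:ℕ)+1:ℝ) * t^(j:ℕ) - pderiv ps t)^2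
                * (-Real.log (1 - t)) / (pderiv ps t)^3)))
            = (∫ t in Set.Ioo (0:ℝ) 1,
              ((-Real.log (1 - t)) / pderiv ps t
              - s * (((j:ℕ)+1:ℝ) * t^(j:ℕ) * (-Real.log (1 - t)) / (pderiv ps t)^2)
              + s * ((-Real.log (1 - t)) / pderiv ps t)))
              + ∫ t in Set.Ioo (0:ℝ) 1, (s^2/(1-s)) * ((((j:ℕ)+1:ℝ) * t^(j:ℕ) - pderiv ps t)^2
                * (-Real.log (1 - t)) / (pderiv ps t)^3) :=
          MeasureTheory.integral_add hx2 ((hint2 j).const_mul _)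
        have e_add2 : (∫ t in Set.Ioo (0:ℝ) 1,
            ((-Real.log (1 - t)) / pderiv ps t
            - s * (((j:ℕ)+1:ℝ) * t^(j:ℕ) * (-Real.log (1 - t)) / (pderiv ps t)^2)
            + s * ((-Real.log (1 - t)) / pderiv ps t)))
            = (∫ t in Set.Ioo (0:ℝ) 1,
              ((-Real.log (1 - t)) / pderiv ps t
              - s * (((j:ℕ)+1:ℝ) * t^(j:ℕ) * (-Real.log (1 - t)) / (pderiv ps t)^2)))
              + ∫ t in Set.Ioo (0:ℝ) 1, s * ((-Real.log (1 - t)) / pderiv ps t) :=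
          MeasureTheory.integral_add hx1 (hint0.const_mul s)
        have e_sub : (∫ t in Set.Ioo (0:ℝ) 1,
            ((-Real.log (1 - t)) / pderiv ps t
            - s * (((j:ℕ)+1:ℝ) * t^(j:ℕ) * (-Real.log (1 - t)) / (pderiv ps t)^2)))
            = (∫ t in Set.Ioo (0:ℝ) 1, (-Real.log (1 - t)) / pderiv ps t)
              - ∫ t in Set.Ioo (0:ℝ) 1,
                  s * (((j:ℕ)+1:ℝ) * t^(j:ℕ) * (-Real.log (1 - t)) / (pderiv ps t)^2) :=
          MeasureTheory.integral_sub hint0 ((hint1 j).const_mul s)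
        have e_c1 : (∫ t in Set.Ioo (0:ℝ) 1,
            s * (((j:ℕ)+1:ℝ) * t^(j:ℕ) * (-Real.log (1 - t)) / (pderiv ps t)^2))
            = s * ∫ t in Set.Ioo (0:ℝ) 1,
                ((j:ℕ)+1:ℝ) * t^(j:ℕ) * (-Real.log (1 - t)) / (pderiv ps t)^2 :=
          MeasureTheory.integral_const_mul s _
        have e_c2 : (∫ t in Set.Ioo (0:ℝ) 1, s * ((-Real.log (1 - t)) / pderiv ps t))
            = s * ∫ t in Set.Ioo (0:ℝ) 1, (-Real.log (1 - t)) / pderiv ps t :=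
          MeasureTheory.integral_const_mul s _
        have e_c3 : (∫ t in Set.Ioo (0:ℝ) 1,
            (s^2/(1-s)) * ((((j:ℕ)+1:ℝ) * t^(j:ℕ) - pderiv ps t)^2
              * (-Real.log (1 - t)) / (pderiv ps t)^3))
            = (s^2/(1-s)) * ∫ t in Set.Ioo (0:ℝ) 1,
                (((j:ℕ)+1:ℝ) * t^(j:ℕ) - pderiv ps t)^2
                  * (-Real.log (1 - t)) / (pderiv ps t)^3 :=
          MeasureTheory.integral_const_mul _ _
        rw [e_add1, e_add2, e_sub, e_c1, e_c2, e_c3, ← hv, ← hI j]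
      have hfin : v ≤ v - s * I j + s * v + (s^2/(1-s)) * ((d:ℝ)^2/c^3 * W) := by
        have h1 := step1.trans (step2.trans_eq hsplit)
        have hr : (0:ℝ) ≤ s^2/(1-s) := by positivity
        nlinarith [mul_le_mul_of_nonneg_left (hf2le j) hr]
      have hrM : (s^2/(1-s)) * ((d:ℝ)^2/c^3 * W) = s * (s/(1-s) * M) := by
        rw [hMdef]; field_simp
      rw [hrM] at hfin
      have hdist := mul_add s v (s/(1-s) * M)
      have hmul : s * I j ≤ s * (v + s/(1-s) * M) := by linarith
      exact le_of_mul_le_mul_left hmul hs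
    -- let s → 0
    apply le_of_forall_pos_le_add
    intro ε hε
    set s : ℝ := min (1/2) (ε/(2*(M+1))) with hsdef
    have hM1 : (0:ℝ) < M + 1 := by linarith
    have hs : 0 < s := lt_min (by norm_num) (by positivity)
    have hs2 : s ≤ 1/2 := min_le_left _ _
    have hsε : s ≤ ε/(2*(M+1)) := min_le_right _ _
    have hs1 : s < 1 := lt_of_le_of_lt hs2 (by norm_num)
    have h1s : (0:ℝ) < 1 - s := by linarith
    have hfrac : s/(1-s) ≤ 2*s := by
      rw [div_le_iff₀ h1s]
      nlinarith
    have hbound : s/(1-s) * M ≤ ε := by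
      have h1 : s/(1-s) * M ≤ 2*s*M :=
        mul_le_mul_of_nonneg_right hfrac hM0
      have h2 : 2*s*M ≤ 2*(ε/(2*(M+1)))*M := by
        apply mul_le_mul_of_nonneg_right _ hM0
        linarith
      have h3 : 2*(ε/(2*(M+1)))*M ≤ ε := by
        have e : 2*(ε/(2*(M+1)))*M = ε*(M/(M+1)) := by field_simp
        have hle : M/(M+1) ≤ 1 := by rw [div_le_one hM1]; linarith
        calc 2*(ε/(2*(M+1)))*M = ε*(M/(M+1)) := e
          _ ≤ ε*1 := mul_le_mul_of_nonneg_left hle hε.le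
          _ = ε := mul_one ε
      linarith
    have := key s hs hs1
    linarith
  -- weighted sum of the I i equals v
  have hsum : ∑ i, ps i * I i = v := by
    have hterm : ∀ i : Fin d, ps i * I i = ∫ t in Set.Ioo (0:ℝ) 1,
        ps i * (((i:ℕ)+1:ℝ) * t^(i:ℕ) * (-Real.log (1 - t)) / (pderiv ps t)^2) := by
      intro i; rw [hI i, MeasureTheory.integral_const_mul]
    rw [Finset.sum_congr rfl fun i _ => hterm i,
      ← MeasureTheory.integral_finset_sum Finset.univ
        (fun i _ => ((hint1 i).const_mul (ps i))), hv]
    apply setIntegral_congr_fun measurableSet_Ioo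
    intro t ht
    have hA := (ha_pos t ht).ne'
    have e1 : ∑ i : Fin d,
        ps i * (((i:ℕ)+1:ℝ) * t^(i:ℕ) * (-Real.log (1 - t)) / (pderiv ps t)^2)
        = (∑ i : Fin d, ((i:ℕ)+1:ℝ) * ps i * t^(i:ℕ))
            * ((-Real.log (1 - t)) / (pderiv ps t)^2) := by
      rw [Finset.sum_mul]; exact Finset.sum_congr rfl fun i _ => by ring
    show (∑ i : Fin d,
        ps i * (((i:ℕ)+1:ℝ) * t^(i:ℕ) * (-Real.log (1 - t)) / (pderiv ps t)^2)) = _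
    rw [e1, show (∑ i : Fin d, ((i:ℕ)+1:ℝ) * ps i * t^(i:ℕ)) = pderiv ps t from rfl]
    field_simp
  refine ⟨?_, hIle⟩
  intro i hpsi
  have hzero : ∑ k : Fin d, ps k * (v - I k) = 0 := by
    have e1 : ∑ k : Fin d, ps k * (v - I k)
        = (∑ k : Fin d, ps k) * v - ∑ k : Fin d, ps k * I k := by
      rw [Finset.sum_mul, ← Finset.sum_sub_distrib]
      exact Finset.sum_congr rfl fun k _ => by ring
    rw [e1, hps1, hsum]; ring
  have hterm0 : ps i * (v - I i) = 0 :=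
    (Finset.sum_eq_zero_iff_of_nonneg fun k _ =>
      mul_nonneg (hps0 k) (sub_nonneg.mpr (hIle k))).mp hzero i (Finset.mem_univ i)
  rcases mul_eq_zero.mp hterm0 with h | h
  · exact absurd h hpsi.ne'
  · linarith
end

section
/- For every p₂ ∈ [0,1], the function t ↦ (−log(1−t)) / ((1−p₂) + 2·p₂·t) is strictly monotonically increasing on the open interval (0,1). -/
/-!
Write `F t = -log (1 - t)` and `u = 1 - t`. The derivative of `F / (a + b t)` has the sign of
`F' (a + b t) - b F = (a + b (1 - u + u log u)) / u`, and `1 - u + u log u > 0` for `0 < u < 1`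
(the tangent-line bound for the convex function `u log u` at `u = 1`). So the quotient is strictly
increasing as soon as `a, b ≥ 0` are not both zero; the theorem is the case `a = 1 - p₂`, `b = 2 p₂`.
-/

open Real Set

lemma add_mul_pos_of_add_pos {a b s : ℝ} (ha : 0 ≤ a) (hb : 0 ≤ b) (hab : 0 < a + b)
    (hs : 0 < s) : 0 < a + b * s := by
  rcases hb.eq_or_lt with rfl | hb
  · simpa using hab
  · positivity

lemma hasDerivAt_neg_log_one_sub {t : ℝ} (ht : t < 1) :
    HasDerivAt (fun t => -log (1 - t)) (1 - t)⁻¹ t := by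
  refine (((hasDerivAt_id t).const_sub 1).log (sub_ne_zero.2 ht.ne')).neg.congr_deriv ?_
  simp [neg_div]

lemma inv_one_sub_mul_add_mul_log_one_sub_pos {a b t : ℝ} (ha : 0 ≤ a) (hb : 0 ≤ b)
    (hab : 0 < a + b) (ht : t ∈ Ioo (0 : ℝ) 1) :
    0 < (1 - t)⁻¹ * (a + b * t) + b * log (1 - t) := by
  obtain ⟨ht0, ht1⟩ := ht
  have hu : 0 < 1 - t := by linarith
  have hgap : 0 < 1 - (1 - t) + (1 - t) * log (1 - t) := by
    linarith [self_sub_one_lt_mul_log hu.le (by linarith : (1 - t) ≠ 1)]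
  have hnum := add_mul_pos_of_add_pos ha hb hab hgap
  calc 0 < (1 - t)⁻¹ * (a + b * (1 - (1 - t) + (1 - t) * log (1 - t))) := by positivity
    _ = (1 - t)⁻¹ * (a + b * t) + b * log (1 - t) := by field_simp; ring

theorem strictMonoOn_neg_log_one_sub_div {a b : ℝ} (ha : 0 ≤ a) (hb : 0 ≤ b) (hab : 0 < a + b) :
    StrictMonoOn (fun t => -log (1 - t) / (a + b * t)) (Ioo 0 1) := by
  have hden : ∀ t ∈ Ioo (0 : ℝ) 1, 0 < a + b * t := fun t ht =>
    add_mul_pos_of_add_pos ha hb hab ht.1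
  have hderiv : ∀ t ∈ Ioo (0 : ℝ) 1, HasDerivAt (fun t => -log (1 - t) / (a + b * t))
      (((1 - t)⁻¹ * (a + b * t) - -log (1 - t) * b) / (a + b * t) ^ 2) t := fun t ht => by
    have hlin : HasDerivAt (fun t => a + b * t) b t := by
      simpa using ((hasDerivAt_id t).const_mul b).const_add a
    exact (hasDerivAt_neg_log_one_sub ht.2).div hlin (hden t ht).ne'
  refine strictMonoOn_of_hasDerivWithinAt_pos (convex_Ioo 0 1)
    (f' := fun t => ((1 - t)⁻¹ * (a + b * t) - -log (1 - t) * b) / (a + b * t) ^ 2)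
    (fun t ht => (hderiv t ht).continuousAt.continuousWithinAt) (fun t ht => ?_) (fun t ht => ?_)
  all_goals rw [interior_Ioo] at ht
  · exact (hderiv t ht).hasDerivWithinAt
  · have hnum := inv_one_sub_mul_add_mul_log_one_sub_pos ha hb hab ht
    exact div_pos (by linarith) (pow_pos (hden t ht) 2)

theorem stmt_15 (p₂ : ℝ) (h0 : 0 ≤ p₂) (h1 : p₂ ≤ 1) :
    StrictMonoOn (fun t : ℝ => (-Real.log (1 - t)) / ((1 - p₂) + 2 * p₂ * t))
      (Set.Ioo (0 : ℝ) 1) :=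
  strictMonoOn_neg_log_one_sub_div (by linarith) (by linarith) (by linarith)
end

section
/- Closed form for the degree-1 partial derivative of the degree-2 objective: for every p₂ ∈ (0,1), ∫₀¹ (−log(1−t)) / ((1−p₂) + 2·p₂·t)² dt = log((1+p₂)/(1−p₂)) / (2·p₂·(1+p₂)). -/
/-!
With `q t = a + b t`, the function
`G t = (1 - t) log (1 - t) / ((a + b) q t) + log (q t) / (b (a + b))`
is a primitive of `-log (1 - t) / q t ^ 2` on `(0, 1)`, and it is continuous on `[0, 1]` because
`x log x → 0` as `x → 0`. The integrand is nonnegative, so it is integrable, and the fundamental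
theorem of calculus gives the value `G 1 - G 0 = (log (a + b) - log a) / (b (a + b))`.
-/

open MeasureTheory Real Set

namespace NegLogOneSubDivSq

variable {a b : ℝ}

noncomputable def primitive (a b : ℝ) (t : ℝ) : ℝ :=
  (1 - t) * log (1 - t) / ((a + b * t) * (a + b)) + log (a + b * t) / (b * (a + b))

lemma linear_pos_of_mem_Icc (ha : 0 < a) (hab : 0 < a + b) {t : ℝ} (ht : t ∈ Icc (0 : ℝ) 1) :
    0 < a + b * t := by
  have : a + b * t = (1 - t) * a + t * (a + b) := by ring
  rw [this]
  rcases eq_or_lt_of_le ht.1 with rfl | ht0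
  · simpa using ha
  · nlinarith [ht.2]

lemma hasDerivAt_primitive (ha : 0 < a) (hab : 0 < a + b) (hb : b ≠ 0) {t : ℝ}
    (ht : t ∈ Ioo (0 : ℝ) 1) :
    HasDerivAt (primitive a b) (-log (1 - t) / (a + b * t) ^ 2) t := by
  have hq : 0 < a + b * t := linear_pos_of_mem_Icc ha hab (Ioo_subset_Icc_self ht)
  have h1t : 0 < 1 - t := by linarith [ht.2]
  have hlin : HasDerivAt (fun t : ℝ => a + b * t) b t := by
    simpa using ((hasDerivAt_id t).const_mul b).const_add a
  have hxlogx : HasDerivAt (fun t : ℝ => (1 - t) * log (1 - t)) ((log (1 - t) + 1) * (-1)) t :=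
    (hasDerivAt_mul_log h1t.ne').comp t ((hasDerivAt_id t).const_sub 1)
  have hG := (hxlogx.div (hlin.mul_const (a + b)) (by positivity)).add
    (((hasDerivAt_log hq.ne').comp t hlin).div_const (b * (a + b)))
  refine hG.congr_deriv ?_
  field_simp
  ring

lemma continuousOn_primitive (ha : 0 < a) (hab : 0 < a + b) :
    ContinuousOn (primitive a b) (Icc 0 1) := by
  intro t ht
  have hq := linear_pos_of_mem_Icc ha hab ht
  have hxlogx : Continuous fun t : ℝ => (1 - t) * log (1 - t) :=
    continuous_mul_log.comp (continuous_const.sub continuous_id)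
  have hlin : ContinuousAt (fun t : ℝ => a + b * t) t := by fun_prop
  exact ((hxlogx.continuousAt.div (hlin.mul continuousAt_const) (mul_pos hq hab).ne').add
    ((hlin.log hq.ne').div_const _)).continuousWithinAt

lemma neg_log_one_sub_div_sq_nonneg {t : ℝ} (ht : t ∈ Ioo (0 : ℝ) 1) :
    0 ≤ -log (1 - t) / (a + b * t) ^ 2 :=
  div_nonneg (neg_nonneg.2 (log_nonpos (by linarith [ht.2]) (by linarith [ht.1])))
    (sq_nonneg _)

theorem integral_neg_log_one_sub_div_sq (ha : 0 < a) (hab : 0 < a + b) (hb : b ≠ 0) :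
    ∫ t in (0 : ℝ)..1, -log (1 - t) / (a + b * t) ^ 2 = log ((a + b) / a) / (b * (a + b)) := by
  have h01 : (0 : ℝ) ≤ 1 := zero_le_one
  have hderiv : ∀ t ∈ Ioo (0 : ℝ) 1,
      HasDerivAt (primitive a b) (-log (1 - t) / (a + b * t) ^ 2) t :=
    fun t ht => hasDerivAt_primitive ha hab hb ht
  have hcont := continuousOn_primitive ha hab
  have hint : IntervalIntegrable (fun t => -log (1 - t) / (a + b * t) ^ 2) volume 0 1 :=
    intervalIntegral.intervalIntegrable_deriv_of_nonneg (uIcc_of_le h01 ▸ hcont)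
      (by simpa [h01] using hderiv)
      (by simpa [h01] using fun t ht => neg_log_one_sub_div_sq_nonneg ht)
  rw [intervalIntegral.integral_eq_sub_of_hasDerivAt_of_le h01 hcont hderiv hint,
    log_div hab.ne' ha.ne']
  simp only [primitive]
  norm_num
  ring

end NegLogOneSubDivSq

theorem stmt_17 (p₂ : ℝ) (h0 : 0 < p₂) (h1 : p₂ < 1) :
    ∫ t in Set.Ioo (0 : ℝ) 1, (-Real.log (1 - t)) / ((1 - p₂) + 2 * p₂ * t) ^ 2 =
      Real.log ((1 + p₂) / (1 - p₂)) / (2 * p₂ * (1 + p₂)) := by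
  have h := NegLogOneSubDivSq.integral_neg_log_one_sub_div_sq
    (a := 1 - p₂) (b := 2 * p₂) (by linarith) (by linarith) (by positivity)
  rw [← integral_Ioc_eq_integral_Ioo, ← intervalIntegral.integral_of_le zero_le_one, h]
  ring_nf
end

section
/- The function t ↦ √(−log(1−t)) is strictly concave on the interval [0, 1 − e^{−1/2}]. -/
open Real Set

private lemma hasDeriv1 (x : ℝ) (h1 : (0:ℝ) < 1 - x) (hg : 0 < -Real.log (1 - x)) :
    HasDerivAt (fun t : ℝ => Real.sqrt (-Real.log (1 - t)))
      ((1/(1-x)) / (2 * Real.sqrt (-Real.log (1-x)))) x := by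
  have hlin : HasDerivAt (fun t : ℝ => 1 - t) (-1) x := (hasDerivAt_id x).const_sub 1
  have hlog : HasDerivAt (fun t : ℝ => -Real.log (1 - t)) (1/(1-x)) x := by
    have := (hlin.log h1.ne').neg
    convert this using 1
    · rfl
    · rfl
    · rfl
    · ring
  have := hlog.sqrt hg.ne'
  exact this

theorem stmt_18 :
    StrictConcaveOn ℝ (Set.Icc (0 : ℝ) (1 - Real.exp (-(1 / 2))))
      (fun t : ℝ => Real.sqrt (-Real.log (1 - t))) := by
  set b : ℝ := 1 - Real.exp (-(1/2)) with hbdef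
  have hexp : Real.exp (-(1/2)) < 1 := by
    exact Real.exp_lt_one_iff.2 (by norm_num)
  have hexp0 : 0 < Real.exp (-(1/2)) := Real.exp_pos _
  have hb0 : 0 < b := by rw [hbdef]; linarith
  have hb1 : b < 1 := by rw [hbdef]; linarith
  apply strictConcaveOn_of_deriv2_neg (convex_Icc _ _)
  · -- continuity
    apply Real.continuous_sqrt.comp_continuousOn
    apply ContinuousOn.neg
    apply ContinuousOn.log (by fun_prop)
    intro t ht
    have : t ≤ b := ht.2
    have : 0 < 1 - t := by linarith
    linarith
  · intro x hx
    rw [interior_Icc] at hx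
    obtain ⟨hx0, hxb⟩ := hx
    have h1 : 0 < 1 - x := by linarith
    have hg0 : 0 < -Real.log (1 - x) := by
      have := Real.log_neg h1 (by linarith : 1 - x < 1)
      linarith
    have hghalf : -Real.log (1 - x) < 1/2 := by
      have hxb' : x < 1 - Real.exp (-(1/2)) := by rw [← hbdef]; exact hxb
      have h : Real.exp (-(1/2)) < 1 - x := by linarith
      have := (Real.lt_log_iff_exp_lt h1).2 h
      linarith
    -- deriv f = F on a neighborhood
    set F : ℝ → ℝ := fun t => (1/(1-t)) / (2 * Real.sqrt (-Real.log (1-t))) with hF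
    have hev : deriv (fun t : ℝ => Real.sqrt (-Real.log (1 - t))) =ᶠ[nhds x] F := by
      filter_upwards [Ioo_mem_nhds hx0 hxb] with t ht
      have ht1 : 0 < 1 - t := by linarith [ht.2]
      have hgt : 0 < -Real.log (1 - t) := by
        have := Real.log_neg ht1 (by linarith [ht.1] : 1 - t < 1)
        linarith
      exact (hasDeriv1 t ht1 hgt).deriv
    have h2 : deriv^[2] (fun t : ℝ => Real.sqrt (-Real.log (1 - t))) x = deriv F x := by
      simp only [Function.iterate_succ, Function.iterate_zero, Function.comp_apply, id]
      exact hev.deriv_eq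
    rw [h2]
    -- compute deriv F x
    set g := -Real.log (1 - x) with hgdef
    set s := Real.sqrt g with hs
    have hs0 : 0 < s := Real.sqrt_pos.2 hg0
    have hs2 : s ^ 2 = g := Real.sq_sqrt hg0.le
    have hu : HasDerivAt (fun t : ℝ => 1/(1-t)) (1/(1-x)^2) x := by
      have hlin : HasDerivAt (fun t : ℝ => 1 - t) (-1) x := (hasDerivAt_id x).const_sub 1
      have := hlin.inv h1.ne'
      simp only [one_div]
      convert this using 1
      · rfl
      · rfl
      · rfl
      · ring
    have hv : HasDerivAt (fun t : ℝ => 2 * Real.sqrt (-Real.log (1-t)))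
        (2 * ((1/(1-x)) / (2 * s))) x := (hasDeriv1 x h1 hg0).const_mul 2
    have hFd : HasDerivAt F ((1/(1-x)^2 * (2*s) - (1/(1-x)) * (2 * ((1/(1-x))/(2*s)))) / (2*s)^2) x :=
      hu.div hv (by positivity)
    rw [hFd.deriv]
    have hnum : 1/(1-x)^2 * (2*s) - (1/(1-x)) * (2 * ((1/(1-x))/(2*s)))
        = (2*s^2 - 1)/((1-x)^2 * s) := by
      field_simp
    rw [hnum]
    exact div_neg_of_neg_of_pos
      (div_neg_of_neg_of_pos (by nlinarith) (by positivity)) (by positivity)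
end

section
/- Differentiation under the integral sign for the objective: for every integer d ≥ 1, every probability vector p ∈ ℝ^d with p_1 > 0, and every i ∈ {1,…,d}, the function s ↦ ∫₀¹ (−log(1−t)) / (p'(t) + s·i·t^{i−1}) dt has derivative at s = 0 equal to ∫₀¹ i·t^{i−1}·log(1−t) / p'(t)² dt (i.e., HasDerivAt at 0 with this value). -/
open MeasureTheory Real

lemma pderiv_measurable {d : ℕ} (p : Fin d → ℝ) : Measurable (pderiv p) := by
  unfold pderiv
  exact Finset.measurable_sum _ fun j _ => by measurability

/-- log lower bound: for `u ∈ (0,1)`, `-log u ≤ 2 * u ^ (-1/2)`. -/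
lemma neg_log_le (u : ℝ) (hu : 0 < u) : -Real.log u ≤ 2 * u ^ (-(1/2) : ℝ) := by
  have h1 : Real.log (u ^ (-(1/2) : ℝ)) = (-(1/2)) * Real.log u := Real.log_rpow hu _
  have h2 : Real.log (u ^ (-(1/2) : ℝ)) ≤ u ^ (-(1/2) : ℝ) - 1 :=
    Real.log_le_sub_one_of_pos (Real.rpow_pos_of_pos hu _)
  nlinarith [Real.rpow_pos_of_pos hu (-(1/2) : ℝ)]

lemma rpow_integrable :
    IntegrableOn (fun t : ℝ => (1 - t) ^ (-(1/2) : ℝ)) (Set.Ioo 0 1) volume := by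
  have h : IntervalIntegrable (fun x : ℝ => x ^ (-(1/2) : ℝ)) volume 0 1 :=
    intervalIntegral.intervalIntegrable_rpow' (by norm_num)
  have h2 := (h.comp_sub_left 1).symm
  simp only [sub_zero, sub_self] at h2
  rw [intervalIntegrable_iff] at h2
  have : Set.uIoc (0:ℝ) 1 = Set.Ioc 0 1 := by
    rw [Set.uIoc_of_le (by norm_num)]
  rw [this] at h2
  exact h2.mono_set Set.Ioo_subset_Ioc_self

theorem stmt_19 (d : ℕ) (hd : 1 ≤ d) (p : Fin d → ℝ)
    (hp0 : ∀ i, 0 ≤ p i) (hp1 : ∑ i, p i = 1) (hp : 0 < p ⟨0, hd⟩)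
    (i : Fin d) :
    HasDerivAt
      (fun s : ℝ => ∫ t in Set.Ioo (0 : ℝ) 1,
        (-Real.log (1 - t)) / (pderiv p t + s * ((i : ℕ) + 1 : ℝ) * t ^ (i : ℕ)))
      (∫ t in Set.Ioo (0 : ℝ) 1,
        ((i : ℕ) + 1 : ℝ) * t ^ (i : ℕ) * Real.log (1 - t) / (pderiv p t) ^ 2)
      0 := by
  set c : ℝ := ((i : ℕ) + 1 : ℝ) with hc
  set n : ℕ := (i : ℕ) with hn
  have hc0 : (0:ℝ) < c := by positivity
  set p0 : ℝ := p ⟨0, hd⟩ with hp0def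
  -- lower bound for pderiv on [0,∞)
  have hA : ∀ t : ℝ, 0 ≤ t → p0 ≤ pderiv p t := by
    intro t ht
    have h0 : p0 = (((⟨0, hd⟩ : Fin d) : ℕ) + 1 : ℝ) * p ⟨0, hd⟩ * t ^ ((⟨0, hd⟩ : Fin d) : ℕ) := by
      simp
      exact hp0def
    rw [h0]
    exact Finset.single_le_sum
      (f := fun j : Fin d => ((j : ℕ) + 1 : ℝ) * p j * t ^ (j : ℕ))
      (fun j _ => mul_nonneg (mul_nonneg (by positivity) (hp0 j)) (pow_nonneg ht _))
      (Finset.mem_univ _)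
  set ε : ℝ := p0 / (2 * c) with hε
  have hεpos : 0 < ε := by positivity
  -- denominator lower bound
  have hden : ∀ x : ℝ, x ∈ Metric.ball (0:ℝ) ε → ∀ t ∈ Set.Ioo (0:ℝ) 1,
      p0 / 2 ≤ pderiv p t + x * c * t ^ n := by
    intro x hx t ht
    rw [Metric.mem_ball, dist_zero_right, Real.norm_eq_abs] at hx
    have ht0 : 0 < t := ht.1
    have ht1 : t < 1 := ht.2
    have htn : t ^ n ≤ 1 := pow_le_one₀ ht0.le ht1.le
    have htn0 : 0 ≤ t ^ n := pow_nonneg ht0.le _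
    have hxb : |x * c * t ^ n| ≤ p0 / 2 := by
      rw [abs_mul, abs_mul, abs_of_pos hc0, abs_of_nonneg htn0]
      calc |x| * c * t ^ n ≤ ε * c * 1 := by
            apply mul_le_mul (mul_le_mul hx.le le_rfl hc0.le hεpos.le) htn htn0
            positivity
        _ = p0 / 2 := by rw [hε]; field_simp
    have h1 := hA t ht0.le
    have h2 := abs_le.mp hxb
    linarith [h2.1]
  set F : ℝ → ℝ → ℝ := fun x t => (-Real.log (1 - t)) / (pderiv p t + x * c * t ^ n) with hF
  set F' : ℝ → ℝ → ℝ :=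
    fun x t => c * t ^ n * Real.log (1 - t) / (pderiv p t + x * c * t ^ n) ^ 2 with hF'
  set bound : ℝ → ℝ := fun t => (c * 2 / (p0 / 2) ^ 2) * (1 - t) ^ (-(1/2) : ℝ) with hbound
  -- measurability
  have hFmeas : ∀ x : ℝ, AEStronglyMeasurable (F x) (volume.restrict (Set.Ioo 0 1)) := by
    intro x
    apply Measurable.aestronglyMeasurable
    exact ((Real.measurable_log.comp (measurable_const.sub measurable_id)).neg).div
      ((pderiv_measurable p).add ((measurable_id.pow_const n).const_mul (x * c)))
  have hF'meas : AEStronglyMeasurable (F' 0) (volume.restrict (Set.Ioo 0 1)) := by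
    apply Measurable.aestronglyMeasurable
    exact (((measurable_id.pow_const n).const_mul c).mul
        (Real.measurable_log.comp (measurable_const.sub measurable_id))).div
      (((pderiv_measurable p).add ((measurable_id.pow_const n).const_mul ((0:ℝ) * c))).pow
        measurable_const)
  -- the log bound on (0,1)
  have hlog : ∀ t ∈ Set.Ioo (0:ℝ) 1,
      0 ≤ -Real.log (1 - t) ∧ -Real.log (1 - t) ≤ 2 * (1 - t) ^ (-(1/2) : ℝ) := by
    intro t ht
    have h1 : 0 < 1 - t := by linarith [ht.2]
    have h2 : 1 - t ≤ 1 := by linarith [ht.1]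
    constructor
    · simpa using Real.log_nonpos h1.le h2
    · exact neg_log_le _ h1
  -- integrability of F 0
  have hF0int : Integrable (F 0) (volume.restrict (Set.Ioo 0 1)) := by
    apply Integrable.mono (g := fun t => (2 / p0) * (1 - t) ^ (-(1/2) : ℝ))
      (rpow_integrable.const_mul _) (hFmeas 0)
    filter_upwards [ae_restrict_mem measurableSet_Ioo] with t ht
    obtain ⟨hl0, hl2⟩ := hlog t ht
    have hApos : 0 < pderiv p t := lt_of_lt_of_le hp (hA t ht.1.le)
    have hd0 : pderiv p t + 0 * c * t ^ n = pderiv p t := by ring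
    have hrp : 0 ≤ (1 - t) ^ (-(1/2) : ℝ) := Real.rpow_nonneg (by linarith [ht.2]) _
    simp only [Real.norm_eq_abs, hF]
    rw [hd0]
    rw [abs_div, abs_of_nonneg hl0, abs_of_pos hApos,
      abs_of_nonneg (by positivity : (0:ℝ) ≤ (2 / p0) * (1 - t) ^ (-(1/2) : ℝ))]
    calc -Real.log (1 - t) / pderiv p t
        ≤ (2 * (1 - t) ^ (-(1/2) : ℝ)) / p0 :=
          div_le_div₀ (by positivity) hl2 hp (hA t ht.1.le)
      _ = (2 / p0) * (1 - t) ^ (-(1/2) : ℝ) := by ring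
  -- bound integrable
  have hbint : Integrable bound (volume.restrict (Set.Ioo 0 1)) :=
    rpow_integrable.const_mul _
  -- pointwise bound on F'
  have h_bound : ∀ᵐ t ∂(volume.restrict (Set.Ioo (0:ℝ) 1)),
      ∀ x ∈ Metric.ball (0:ℝ) ε, ‖F' x t‖ ≤ bound t := by
    filter_upwards [ae_restrict_mem measurableSet_Ioo] with t ht x hx
    obtain ⟨hl0, hl2⟩ := hlog t ht
    have hD := hden x hx t ht
    have hp02 : (0:ℝ) < p0 / 2 := by positivity
    have hDpos : 0 < pderiv p t + x * c * t ^ n := lt_of_lt_of_le hp02 hD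
    have hD2 : (p0 / 2) ^ 2 ≤ (pderiv p t + x * c * t ^ n) ^ 2 := by nlinarith
    have htn : t ^ n ≤ 1 := pow_le_one₀ ht.1.le ht.2.le
    have htn0 : 0 ≤ t ^ n := pow_nonneg ht.1.le _
    have hrp : 0 ≤ (1 - t) ^ (-(1/2) : ℝ) := Real.rpow_nonneg (by linarith [ht.2]) _
    rw [hF', Real.norm_eq_abs, abs_div, abs_of_nonneg (by positivity : (0:ℝ) ≤ (pderiv p t + x * c * t ^ n) ^ 2)]
    have hnum : |c * t ^ n * Real.log (1 - t)| = c * t ^ n * (-Real.log (1 - t)) := by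
      rw [abs_mul, abs_of_nonneg (by positivity : (0:ℝ) ≤ c * t ^ n), abs_of_nonpos (by linarith)]
    rw [hnum]
    have hnumle : c * t ^ n * (-Real.log (1 - t)) ≤ c * 2 * (1 - t) ^ (-(1/2) : ℝ) := by
      calc c * t ^ n * (-Real.log (1 - t)) ≤ c * 1 * (2 * (1 - t) ^ (-(1/2) : ℝ)) := by
            apply mul_le_mul (by nlinarith) hl2 hl0 (by positivity)
        _ = c * 2 * (1 - t) ^ (-(1/2) : ℝ) := by ring
    calc c * t ^ n * (-Real.log (1 - t)) / (pderiv p t + x * c * t ^ n) ^ 2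
        ≤ (c * 2 * (1 - t) ^ (-(1/2) : ℝ)) / (p0 / 2) ^ 2 :=
          div_le_div₀ (by positivity) hnumle (by positivity) hD2
      _ = bound t := by rw [hbound]; ring
  -- differentiability
  have h_diff : ∀ᵐ t ∂(volume.restrict (Set.Ioo (0:ℝ) 1)),
      ∀ x ∈ Metric.ball (0:ℝ) ε, HasDerivAt (F · t) (F' x t) x := by
    filter_upwards [ae_restrict_mem measurableSet_Ioo] with t ht x hx
    have hD := hden x hx t ht
    have hp02 : (0:ℝ) < p0 / 2 := by positivity
    have hDne : pderiv p t + x * c * t ^ n ≠ 0 := (lt_of_lt_of_le hp02 hD).ne'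
    have hDder : HasDerivAt (fun y : ℝ => pderiv p t + y * c * t ^ n) (c * t ^ n) x := by
      simpa [mul_assoc] using
        (((hasDerivAt_id x).mul_const (c * t ^ n)).const_add (pderiv p t))
    have := (hasDerivAt_const x (-Real.log (1 - t))).div hDder hDne
    have h2 : F' x t = ((0 * (pderiv p t + x * c * t ^ n) - -Real.log (1 - t) * (c * t ^ n)) / (pderiv p t + x * c * t ^ n) ^ 2) := by
      simp only [hF']; ring
    rw [h2]; exact this
  have key := hasDerivAt_integral_of_dominated_loc_of_deriv_le (Metric.ball_mem_nhds 0 hεpos)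
    (Filter.Eventually.of_forall hFmeas) hF0int hF'meas h_bound hbint h_diff
  have h2 := key.2
  have heq : ∀ t : ℝ, F' 0 t = c * t ^ n * Real.log (1 - t) / (pderiv p t) ^ 2 := by
    intro t; rw [hF']; norm_num
  simpa [hF, heq] using h2
end
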